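/- Define Z_1 f = −X_s²(∂_x f) + i y (E+1)(2E+1)f + i X_s(q(2E+1)f) and Z_2 f = −X_s²(∂_y f) − i x (E+1)(2E+1)f + X_s(∂_q(2E+1)f). Then, as identities of operators on smooth functions: Z_1 Z_2 − Z_2 Z_1 = 0; ∂_x Z_1 − Z_1 ∂_x = −2i X̃(2E+1); ∂_y Z_1 − Z_1 ∂_y = 2 X_s D_s + i H̃(2E+1) + i (2E+1)(2E+1) + (i/2)·Id; ∂_x Z_2 − Z_2 ∂_x = −2 X_s D_s + i H̃(2E+1) − i (2E+1)(2E+1) − (i/2)·Id; and ∂_y Z_2 − Z_2 ∂_y = 2i Ỹ(2E+1). -/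

import Mathlib

noncomputable section

open Complex Finset

/-- Points `(x, y, q)` of `ℝ³`. -/
abbrev P3 := ℝ × ℝ × ℝ

/-- Partial derivative with respect to `x`. -/
def pdx (f : P3 → ℂ) : P3 → ℂ := fun p => deriv (fun t => f (t, p.2.1, p.2.2)) p.1

/-- Partial derivative with respect to `y`. -/
def pdy (f : P3 → ℂ) : P3 → ℂ := fun p => deriv (fun t => f (p.1, t, p.2.2)) p.2.1

/-- Partial derivative with respect to `q`. -/
def pdq (f : P3 → ℂ) : P3 → ℂ := fun p => deriv (fun t => f (p.1, p.2.1, t)) p.2.2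

/-- The symplectic Dirac operator `D_s f = i q ∂_y f − ∂_x ∂_q f`. -/
def Ds (f : P3 → ℂ) : P3 → ℂ := fun p =>
  Complex.I * (p.2.2 : ℂ) * pdy f p - pdx (pdq f) p

/-- The operator `X_s f = y ∂_q f + i x q f`. -/
def Xs (f : P3 → ℂ) : P3 → ℂ := fun p =>
  (p.2.1 : ℂ) * pdq f p + Complex.I * (p.1 : ℂ) * (p.2.2 : ℂ) * f p

/-- The Euler operator `E f = x ∂_x f + y ∂_y f`. -/
def Eul (f : P3 → ℂ) : P3 → ℂ := fun p =>
  (p.1 : ℂ) * pdx f p + (p.2.1 : ℂ) * pdy f p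

/-- The metaplectic operator `X̃ f = −y ∂_x f − (i/2) q² f`. -/
def Xt (f : P3 → ℂ) : P3 → ℂ := fun p =>
  -(p.2.1 : ℂ) * pdx f p - (Complex.I / 2) * (p.2.2 : ℂ) ^ 2 * f p

/-- The metaplectic operator `Ỹ f = −x ∂_y f − (i/2) ∂_q² f`. -/
def Yt (f : P3 → ℂ) : P3 → ℂ := fun p =>
  -(p.1 : ℂ) * pdy f p - (Complex.I / 2) * pdq (pdq f) p

/-- The metaplectic operator `H̃ f = −x ∂_x f + y ∂_y f + q ∂_q f + (1/2) f`. -/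
def Ht (f : P3 → ℂ) : P3 → ℂ := fun p =>
  -(p.1 : ℂ) * pdx f p + (p.2.1 : ℂ) * pdy f p + (p.2.2 : ℂ) * pdq f p + (1 / 2) * f p

/-- The operator `2E + 1`. -/
def A1 (f : P3 → ℂ) : P3 → ℂ := fun p => 2 * Eul f p + f p

/-- `Z_1 f = −X_s²(∂_x f) + i y (E+1)(2E+1)f + i X_s(q(2E+1)f)`. -/
def Z1 (f : P3 → ℂ) : P3 → ℂ := fun p =>
  -(Xs (Xs (pdx f)) p) + Complex.I * (p.2.1 : ℂ) * (Eul (A1 f) p + A1 f p) +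
    Complex.I * Xs (fun r => (r.2.2 : ℂ) * A1 f r) p

/-- `Z_2 f = −X_s²(∂_y f) − i x (E+1)(2E+1)f + X_s(∂_q(2E+1)f)`. -/
def Z2 (f : P3 → ℂ) : P3 → ℂ := fun p =>
  -(Xs (Xs (pdy f)) p) - Complex.I * (p.1 : ℂ) * (Eul (A1 f) p + A1 f p) +
    Xs (pdq (A1 f)) p

section AuxPD
variable {f g : P3 → ℂ}


lemma hasDerivAt_cx (p : P3) : HasDerivAt (fun t : ℝ => ((t, p.2.1, p.2.2) : P3)) (1,0,0) p.1 :=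
  (hasDerivAt_id _).prodMk (hasDerivAt_const _ _)
lemma hasDerivAt_cy (p : P3) : HasDerivAt (fun t : ℝ => ((p.1, t, p.2.2) : P3)) (0,1,0) p.2.1 :=
  (hasDerivAt_const _ _).prodMk ((hasDerivAt_id _).prodMk (hasDerivAt_const _ _))
lemma hasDerivAt_cq (p : P3) : HasDerivAt (fun t : ℝ => ((p.1, p.2.1, t) : P3)) (0,0,1) p.2.2 :=
  (hasDerivAt_const _ _).prodMk ((hasDerivAt_const _ _).prodMk (hasDerivAt_id _))

lemma pdx_eq (hf : ContDiff ℝ (⊤ : ℕ∞) f) (p : P3) : pdx f p = fderiv ℝ f p (1,0,0) :=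
  ((hf.differentiable (by simp) p).hasFDerivAt.comp_hasDerivAt p.1 (hasDerivAt_cx p)).deriv
lemma pdy_eq (hf : ContDiff ℝ (⊤ : ℕ∞) f) (p : P3) : pdy f p = fderiv ℝ f p (0,1,0) :=
  ((hf.differentiable (by simp) p).hasFDerivAt.comp_hasDerivAt p.2.1 (hasDerivAt_cy p)).deriv
lemma pdq_eq (hf : ContDiff ℝ (⊤ : ℕ∞) f) (p : P3) : pdq f p = fderiv ℝ f p (0,0,1) :=
  ((hf.differentiable (by simp) p).hasFDerivAt.comp_hasDerivAt p.2.2 (hasDerivAt_cq p)).deriv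

@[fun_prop] lemma contDiff_pdx (hf : ContDiff ℝ (⊤ : ℕ∞) f) : ContDiff ℝ (⊤ : ℕ∞) (pdx f) := by
  have h : pdx f = fun p => fderiv ℝ f p (1,0,0) := funext (pdx_eq hf)
  rw [h]; exact (hf.fderiv_right (by simp)).clm_apply contDiff_const
@[fun_prop] lemma contDiff_pdy (hf : ContDiff ℝ (⊤ : ℕ∞) f) : ContDiff ℝ (⊤ : ℕ∞) (pdy f) := by
  have h : pdy f = fun p => fderiv ℝ f p (0,1,0) := funext (pdy_eq hf)
  rw [h]; exact (hf.fderiv_right (by simp)).clm_apply contDiff_const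
@[fun_prop] lemma contDiff_pdq (hf : ContDiff ℝ (⊤ : ℕ∞) f) : ContDiff ℝ (⊤ : ℕ∞) (pdq f) := by
  have h : pdq f = fun p => fderiv ℝ f p (0,0,1) := funext (pdq_eq hf)
  rw [h]; exact (hf.fderiv_right (by simp)).clm_apply contDiff_const

@[fun_prop] lemma contDiff_c1 : ContDiff ℝ (⊤ : ℕ∞) (fun p : P3 => (p.1 : ℂ)) :=
  Complex.ofRealCLM.contDiff.comp contDiff_fst
@[fun_prop] lemma contDiff_c2 : ContDiff ℝ (⊤ : ℕ∞) (fun p : P3 => (p.2.1 : ℂ)) :=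
  Complex.ofRealCLM.contDiff.comp (contDiff_fst.comp contDiff_snd)
@[fun_prop] lemma contDiff_c3 : ContDiff ℝ (⊤ : ℕ∞) (fun p : P3 => (p.2.2 : ℂ)) :=
  Complex.ofRealCLM.contDiff.comp (contDiff_snd.comp contDiff_snd)

lemma pd_swap (hf : ContDiff ℝ (⊤ : ℕ∞) f) (v w : P3) (p : P3) :
    fderiv ℝ (fun r => fderiv ℝ f r w) p v = fderiv ℝ (fun r => fderiv ℝ f r v) p w := by
  have hd : DifferentiableAt ℝ (fderiv ℝ f) p :=
    ((hf.fderiv_right (m := (⊤ : ℕ∞)) (by simp)).differentiable (by simp)) p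
  rw [fderiv_clm_apply hd (differentiableAt_const w),
      fderiv_clm_apply hd (differentiableAt_const v)]
  simp only [fderiv_const, fderiv_const_apply, Pi.zero_apply, ContinuousLinearMap.comp_zero,
    ContinuousLinearMap.zero_comp, zero_add, ContinuousLinearMap.add_apply,
    ContinuousLinearMap.flip_apply, ContinuousLinearMap.zero_apply]
  exact (hf.contDiffAt.isSymmSndFDerivAt (by rw [minSmoothness_of_isRCLikeNormedField]; exact WithTop.coe_le_coe.mpr le_top)) v w

-- slice HasDerivAt

lemma hdx (hf : ContDiff ℝ (⊤ : ℕ∞) f) (p : P3) :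
    HasDerivAt (fun t => f (t, p.2.1, p.2.2)) (pdx f p) p.1 := by
  rw [pdx_eq hf]
  exact (hf.differentiable (by simp) p).hasFDerivAt.comp_hasDerivAt p.1 (hasDerivAt_cx p)
lemma hdy (hf : ContDiff ℝ (⊤ : ℕ∞) f) (p : P3) :
    HasDerivAt (fun t => f (p.1, t, p.2.2)) (pdy f p) p.2.1 := by
  rw [pdy_eq hf]
  exact (hf.differentiable (by simp) p).hasFDerivAt.comp_hasDerivAt p.2.1 (hasDerivAt_cy p)
lemma hdq (hf : ContDiff ℝ (⊤ : ℕ∞) f) (p : P3) :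
    HasDerivAt (fun t => f (p.1, p.2.1, t)) (pdq f p) p.2.2 := by
  rw [pdq_eq hf]
  exact (hf.differentiable (by simp) p).hasFDerivAt.comp_hasDerivAt p.2.2 (hasDerivAt_cq p)

-- linearity / product rules
lemma pdx_add (hf : ContDiff ℝ (⊤ : ℕ∞) f) (hg : ContDiff ℝ (⊤ : ℕ∞) g) :
    pdx (fun p => f p + g p) = fun p => pdx f p + pdx g p :=
  funext fun p => ((hdx hf p).add (hdx hg p)).deriv
lemma pdy_add (hf : ContDiff ℝ (⊤ : ℕ∞) f) (hg : ContDiff ℝ (⊤ : ℕ∞) g) :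
    pdy (fun p => f p + g p) = fun p => pdy f p + pdy g p :=
  funext fun p => ((hdy hf p).add (hdy hg p)).deriv
lemma pdq_add (hf : ContDiff ℝ (⊤ : ℕ∞) f) (hg : ContDiff ℝ (⊤ : ℕ∞) g) :
    pdq (fun p => f p + g p) = fun p => pdq f p + pdq g p :=
  funext fun p => ((hdq hf p).add (hdq hg p)).deriv
lemma pdx_sub (hf : ContDiff ℝ (⊤ : ℕ∞) f) (hg : ContDiff ℝ (⊤ : ℕ∞) g) :
    pdx (fun p => f p - g p) = fun p => pdx f p - pdx g p :=
  funext fun p => ((hdx hf p).sub (hdx hg p)).deriv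
lemma pdy_sub (hf : ContDiff ℝ (⊤ : ℕ∞) f) (hg : ContDiff ℝ (⊤ : ℕ∞) g) :
    pdy (fun p => f p - g p) = fun p => pdy f p - pdy g p :=
  funext fun p => ((hdy hf p).sub (hdy hg p)).deriv
lemma pdq_sub (hf : ContDiff ℝ (⊤ : ℕ∞) f) (hg : ContDiff ℝ (⊤ : ℕ∞) g) :
    pdq (fun p => f p - g p) = fun p => pdq f p - pdq g p :=
  funext fun p => ((hdq hf p).sub (hdq hg p)).deriv
lemma pdx_neg (hf : ContDiff ℝ (⊤ : ℕ∞) f) : pdx (fun p => -f p) = fun p => -pdx f p :=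
  funext fun p => (hdx hf p).neg.deriv
lemma pdy_neg (hf : ContDiff ℝ (⊤ : ℕ∞) f) : pdy (fun p => -f p) = fun p => -pdy f p :=
  funext fun p => (hdy hf p).neg.deriv
lemma pdq_neg (hf : ContDiff ℝ (⊤ : ℕ∞) f) : pdq (fun p => -f p) = fun p => -pdq f p :=
  funext fun p => (hdq hf p).neg.deriv
lemma pdx_mul (hf : ContDiff ℝ (⊤ : ℕ∞) f) (hg : ContDiff ℝ (⊤ : ℕ∞) g) :
    pdx (fun p => f p * g p) = fun p => pdx f p * g p + f p * pdx g p :=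
  funext fun p => ((hdx hf p).mul (hdx hg p)).deriv
lemma pdy_mul (hf : ContDiff ℝ (⊤ : ℕ∞) f) (hg : ContDiff ℝ (⊤ : ℕ∞) g) :
    pdy (fun p => f p * g p) = fun p => pdy f p * g p + f p * pdy g p :=
  funext fun p => ((hdy hf p).mul (hdy hg p)).deriv
lemma pdq_mul (hf : ContDiff ℝ (⊤ : ℕ∞) f) (hg : ContDiff ℝ (⊤ : ℕ∞) g) :
    pdq (fun p => f p * g p) = fun p => pdq f p * g p + f p * pdq g p :=
  funext fun p => ((hdq hf p).mul (hdq hg p)).deriv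

-- base cases
lemma pdx_const (c : ℂ) : pdx (fun _ => c) = fun _ => 0 := funext fun p => by simp [pdx, pdy, pdq]
lemma pdy_const (c : ℂ) : pdy (fun _ => c) = fun _ => 0 := funext fun p => by simp [pdx, pdy, pdq]
lemma pdq_const (c : ℂ) : pdq (fun _ => c) = fun _ => 0 := funext fun p => by simp [pdx, pdy, pdq]
lemma hdcoord (x : ℝ) : HasDerivAt (fun t : ℝ => (t : ℂ)) 1 x := by
  simpa using (hasDerivAt_id x).ofReal_comp
lemma pdx_c1 : pdx (fun p : P3 => (p.1 : ℂ)) = fun _ => 1 := funext fun p => (hdcoord p.1).deriv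
lemma pdx_c2 : pdx (fun p : P3 => (p.2.1 : ℂ)) = fun _ => 0 := funext fun p => by simp [pdx, pdy, pdq]
lemma pdx_c3 : pdx (fun p : P3 => (p.2.2 : ℂ)) = fun _ => 0 := funext fun p => by simp [pdx, pdy, pdq]
lemma pdy_c1 : pdy (fun p : P3 => (p.1 : ℂ)) = fun _ => 0 := funext fun p => by simp [pdx, pdy, pdq]
lemma pdy_c2 : pdy (fun p : P3 => (p.2.1 : ℂ)) = fun _ => 1 := funext fun p => (hdcoord p.2.1).deriv
lemma pdy_c3 : pdy (fun p : P3 => (p.2.2 : ℂ)) = fun _ => 0 := funext fun p => by simp [pdx, pdy, pdq]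
lemma pdq_c1 : pdq (fun p : P3 => (p.1 : ℂ)) = fun _ => 0 := funext fun p => by simp [pdx, pdy, pdq]
lemma pdq_c2 : pdq (fun p : P3 => (p.2.1 : ℂ)) = fun _ => 0 := funext fun p => by simp [pdx, pdy, pdq]
lemma pdq_c3 : pdq (fun p : P3 => (p.2.2 : ℂ)) = fun _ => 1 := funext fun p => (hdcoord p.2.2).deriv

-- swaps (normal form: pdx outside pdy outside pdq)
lemma pd_yx (hf : ContDiff ℝ (⊤ : ℕ∞) f) : pdy (pdx f) = pdx (pdy f) := by
  funext p
  rw [pdy_eq (contDiff_pdx hf) p, pdx_eq (contDiff_pdy hf) p,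
    show pdx f = fun r => fderiv ℝ f r (1,0,0) from funext (pdx_eq hf),
    show pdy f = fun r => fderiv ℝ f r (0,1,0) from funext (pdy_eq hf)]
  exact pd_swap hf _ _ p
lemma pd_qx (hf : ContDiff ℝ (⊤ : ℕ∞) f) : pdq (pdx f) = pdx (pdq f) := by
  funext p
  rw [pdq_eq (contDiff_pdx hf) p, pdx_eq (contDiff_pdq hf) p,
    show pdx f = fun r => fderiv ℝ f r (1,0,0) from funext (pdx_eq hf),
    show pdq f = fun r => fderiv ℝ f r (0,0,1) from funext (pdq_eq hf)]
  exact pd_swap hf _ _ p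
lemma pd_qy (hf : ContDiff ℝ (⊤ : ℕ∞) f) : pdq (pdy f) = pdy (pdq f) := by
  funext p
  rw [pdq_eq (contDiff_pdy hf) p, pdy_eq (contDiff_pdq hf) p,
    show pdy f = fun r => fderiv ℝ f r (0,1,0) from funext (pdy_eq hf),
    show pdq f = fun r => fderiv ℝ f r (0,0,1) from funext (pdq_eq hf)]
  exact pd_swap hf _ _ p

end AuxPD
set_option maxHeartbeats 0 in
/-- The commutation relations `[Z_1, Z_2] = 0`, `[∂_x, Z_1] = −2i X̃(2E+1)`,
`[∂_y, Z_1] = 2X_sD_s + i H̃(2E+1) + i(2E+1)² + i/2`,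
`[∂_x, Z_2] = −2X_sD_s + i H̃(2E+1) − i(2E+1)² − i/2`, and `[∂_y, Z_2] = 2i Ỹ(2E+1)`,
as identities of operators on smooth functions. -/
theorem Z_commutators (f : P3 → ℂ) (hf : ContDiff ℝ (⊤ : ℕ∞) f) :
    (∀ p, Z1 (Z2 f) p - Z2 (Z1 f) p = 0) ∧
    (∀ p, pdx (Z1 f) p - Z1 (pdx f) p = -2 * Complex.I * Xt (A1 f) p) ∧
    (∀ p, pdy (Z1 f) p - Z1 (pdy f) p =
      2 * Xs (Ds f) p + Complex.I * Ht (A1 f) p + Complex.I * A1 (A1 f) p +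
        (Complex.I / 2) * f p) ∧
    (∀ p, pdx (Z2 f) p - Z2 (pdx f) p =
      -2 * Xs (Ds f) p + Complex.I * Ht (A1 f) p - Complex.I * A1 (A1 f) p -
        (Complex.I / 2) * f p) ∧
    (∀ p, pdy (Z2 f) p - Z2 (pdy f) p = 2 * Complex.I * Yt (A1 f) p) := by
  refine ⟨?_, ?_, ?_, ?_, ?_⟩ <;> intro p
  case refine_1 =>
    unfold Z1 Z2 Xs A1 Eul
    simp (disch := fun_prop) only [pdx_add, pdy_add, pdq_add, pdx_sub, pdy_sub, pdq_sub,
      pdx_neg, pdy_neg, pdq_neg, pdx_mul, pdy_mul, pdq_mul, pdx_const, pdy_const, pdq_const,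
      pdx_c1, pdx_c2, pdx_c3, pdy_c1, pdy_c2, pdy_c3, pdq_c1, pdq_c2, pdq_c3,
      pd_yx, pd_qx, pd_qy, zero_mul, mul_zero, zero_add, add_zero, one_mul, mul_one, neg_zero]
    ring_nf
    try simp only [Complex.I_sq]
    try ring
  case refine_2 =>
    unfold Z1 Xs Xt A1 Eul
    simp (disch := fun_prop) only [pdx_add, pdy_add, pdq_add, pdx_sub, pdy_sub, pdq_sub,
      pdx_neg, pdy_neg, pdq_neg, pdx_mul, pdy_mul, pdq_mul, pdx_const, pdy_const, pdq_const,
      pdx_c1, pdx_c2, pdx_c3, pdy_c1, pdy_c2, pdy_c3, pdq_c1, pdq_c2, pdq_c3,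
      pd_yx, pd_qx, pd_qy, zero_mul, mul_zero, zero_add, add_zero, one_mul, mul_one, neg_zero]
    ring_nf
    try simp only [Complex.I_sq]
    try ring
  case refine_3 =>
    unfold Z1 Xs Ds Ht A1 Eul
    simp (disch := fun_prop) only [pdx_add, pdy_add, pdq_add, pdx_sub, pdy_sub, pdq_sub,
      pdx_neg, pdy_neg, pdq_neg, pdx_mul, pdy_mul, pdq_mul, pdx_const, pdy_const, pdq_const,
      pdx_c1, pdx_c2, pdx_c3, pdy_c1, pdy_c2, pdy_c3, pdq_c1, pdq_c2, pdq_c3,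
      pd_yx, pd_qx, pd_qy, zero_mul, mul_zero, zero_add, add_zero, one_mul, mul_one, neg_zero]
    ring_nf
    try simp only [Complex.I_sq]
    try ring
  case refine_4 =>
    unfold Z2 Xs Ds Ht A1 Eul
    simp (disch := fun_prop) only [pdx_add, pdy_add, pdq_add, pdx_sub, pdy_sub, pdq_sub,
      pdx_neg, pdy_neg, pdq_neg, pdx_mul, pdy_mul, pdq_mul, pdx_const, pdy_const, pdq_const,
      pdx_c1, pdx_c2, pdx_c3, pdy_c1, pdy_c2, pdy_c3, pdq_c1, pdq_c2, pdq_c3,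
      pd_yx, pd_qx, pd_qy, zero_mul, mul_zero, zero_add, add_zero, one_mul, mul_one, neg_zero]
    ring_nf
    try simp only [Complex.I_sq]
    try ring
  case refine_5 =>
    unfold Z2 Xs Yt A1 Eul
    simp (disch := fun_prop) only [pdx_add, pdy_add, pdq_add, pdx_sub, pdy_sub, pdq_sub,
      pdx_neg, pdy_neg, pdq_neg, pdx_mul, pdy_mul, pdq_mul, pdx_const, pdy_const, pdq_const,
      pdx_c1, pdx_c2, pdx_c3, pdy_c1, pdy_c2, pdy_c3, pdq_c1, pdq_c2, pdq_c3,
      pd_yx, pd_qx, pd_qy, zero_mul, mul_zero, zero_add, add_zero, one_mul, mul_one, neg_zero]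
    ring_nf
    try simp only [Complex.I_sq]
    try ring
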